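/- Let X be a ringed space, N a g-pure-injective O_X-module, and U ⊆ X open. Then the restriction N|_U is a g-pure-injective O_U-module. -/

import Mathlib

open TopologicalSpace CategoryTheory

universe u

namespace SheafPurity

/-! ## Purity for modules over a ring (via finite systems of linear equations) -/

/-- A linear map is a pure monomorphism if it is injective and every finite system of
linear equations with constants in `A` that is solvable in `B` is solvable in `A`. -/
def IsPureMono {R : Type u} [Ring R] {A B : Type u} [AddCommGroup A] [Module R A]
    [AddCommGroup B] [Module R B] (f : A →ₗ[R] B) : Prop :=
  Function.Injective f ∧
    ∀ (m n : ℕ) (G : Matrix (Fin m) (Fin n) R) (a : Fin m → A) (b : Fin n → B),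
      (∀ i, (∑ j, G i j • b j) = f (a i)) →
      ∃ a' : Fin n → A, ∀ i, (∑ j, G i j • a' j) = a i

/-- A module is pure-injective if every morphism to it extends along pure monomorphisms. -/
def PureInjectiveModule (R : Type u) [Ring R] (M : Type u) [AddCommGroup M]
    [Module R M] : Prop :=
  ∀ (A B : Type u) [AddCommGroup A] [Module R A] [AddCommGroup B] [Module R B]
    (f : A →ₗ[R] B), IsPureMono f → ∀ g : A →ₗ[R] M, ∃ h : B →ₗ[R] M, h.comp f = g

/-! ## Sheaves of rings and sheaves of modules on a topological space -/

variable (X : Type u) [TopologicalSpace X]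

/-- The sheaf condition for a family of sections with restriction maps: compatible
families of sections over a cover glue uniquely. -/
def IsSheafFamily (F : Opens X → Type u)
    (res : ∀ (U V : Opens X), V ≤ U → F U → F V) : Prop :=
  ∀ (ι : Type u) (U : Opens X) (V : ι → Opens X) (hU : U = iSup V) (s : ∀ i, F (V i)),
    (∀ (i j : ι) (W : Opens X) (hWi : W ≤ V i) (hWj : W ≤ V j),
      res (V i) W hWi (s i) = res (V j) W hWj (s j)) →
    ∃! t : F U, ∀ i, res U (V i) ((le_iSup V i).trans hU.ge) t = s i

/-- A sheaf of commutative rings on `X`; `X` together with such a sheaf is a ringed space. -/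
structure RingSheaf where
  obj : Opens X → Type u
  ring : ∀ U, CommRing (obj U)
  res : ∀ {U V : Opens X}, V ≤ U → obj U →+* obj V
  res_id : ∀ {U : Opens X} (s : obj U), res le_rfl s = s
  res_res : ∀ {U V W : Opens X} (h1 : W ≤ V) (h2 : V ≤ U) (s : obj U),
    res h1 (res h2 s) = res (h1.trans h2) s
  sheaf : IsSheafFamily X obj fun _ _ h s => res h s

attribute [instance] RingSheaf.ring

variable {X}

/-- A sheaf of `O`-modules on the ringed space `(X, O)`. -/
structure OMod (O : RingSheaf X) where
  obj : Opens X → Type u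
  acg : ∀ U, AddCommGroup (obj U)
  mod : ∀ U, Module (O.obj U) (obj U)
  res : ∀ {U V : Opens X}, V ≤ U → obj U →+ obj V
  res_id : ∀ {U : Opens X} (s : obj U), res le_rfl s = s
  res_res : ∀ {U V W : Opens X} (h1 : W ≤ V) (h2 : V ≤ U) (s : obj U),
    res h1 (res h2 s) = res (h1.trans h2) s
  res_smul : ∀ {U V : Opens X} (h : V ≤ U) (r : O.obj U) (m : obj U),
    res h (r • m) = O.res h r • res h m
  sheaf : IsSheafFamily X obj fun _ _ h s => res h s

attribute [instance] OMod.acg OMod.mod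

variable {O : RingSheaf X}

/-- Morphisms of sheaves of `O`-modules. -/
@[ext]
structure Hom (M N : OMod O) where
  app : ∀ U, M.obj U →ₗ[O.obj U] N.obj U
  naturality : ∀ {U V : Opens X} (h : V ≤ U) (m : M.obj U),
    N.res h (app U m) = app V (M.res h m)

instance : Category (OMod O) where
  Hom M N := Hom M N
  id M := ⟨fun _ => LinearMap.id, fun _ _ => rfl⟩
  comp f g := ⟨fun U => (g.app U).comp (f.app U), fun h m => by
    simp only [LinearMap.comp_apply]
    rw [g.naturality, f.naturality]⟩
  id_comp f := by apply Hom.ext; rfl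
  comp_id f := by apply Hom.ext; rfl
  assoc f g h := by apply Hom.ext; rfl

lemma hom_app {M N : OMod O} (f : M ⟶ N) (U : Opens X) : (f : Hom M N).app U = f.app U := rfl

@[simp] lemma comp_app {M N P : OMod O} (f : M ⟶ N) (g : N ⟶ P) (U : Opens X) (m : M.obj U) :
    (f ≫ g).app U m = g.app U (f.app U m) := rfl

@[simp] lemma id_app (M : OMod O) (U : Opens X) (m : M.obj U) :
    (Hom.app (𝟙 M) U) m = m := rfl

end SheafPurity

namespace SheafPurity

variable {X : Type u} [TopologicalSpace X] {O : RingSheaf X}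

/-! ## Stalks -/

/-- An open neighbourhood of `x`. -/
structure Nbhd (x : X) where
  U : Opens X
  mem : x ∈ U

instance (x : X) : Inhabited (Nbhd x) := ⟨⟨⊤, trivial⟩⟩

/-- Intersection of neighbourhoods. -/
def Nbhd.inf {x : X} (N₁ N₂ : Nbhd x) : Nbhd x := ⟨N₁.U ⊓ N₂.U, ⟨N₁.mem, N₂.mem⟩⟩

lemma Nbhd.inf_le_left {x : X} (N₁ N₂ : Nbhd x) : (N₁.inf N₂).U ≤ N₁.U := _root_.inf_le_left
lemma Nbhd.inf_le_right {x : X} (N₁ N₂ : Nbhd x) : (N₁.inf N₂).U ≤ N₂.U := _root_.inf_le_right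

/-- The germ relation. -/
def germRel (M : OMod O) (x : X) :
    (Σ N : Nbhd x, M.obj N.U) → (Σ N : Nbhd x, M.obj N.U) → Prop :=
  fun a b => ∃ (N : Nbhd x) (h₁ : N.U ≤ a.1.U) (h₂ : N.U ≤ b.1.U),
    M.res h₁ a.2 = M.res h₂ b.2

/-- The stalk of a sheaf of modules at a point. -/
def Stalk (M : OMod O) (x : X) : Type u := Quot (germRel M x)

/-- The germ of a section. -/
def germ {M : OMod O} {x : X} (N : Nbhd x) (s : M.obj N.U) : Stalk M x :=
  Quot.mk _ ⟨N, s⟩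

lemma germ_eq {M : OMod O} {x : X} {N₁ N₂ : Nbhd x} {s₁ : M.obj N₁.U} {s₂ : M.obj N₂.U}
    (N : Nbhd x) (h₁ : N.U ≤ N₁.U) (h₂ : N.U ≤ N₂.U)
    (h : M.res h₁ s₁ = M.res h₂ s₂) : germ N₁ s₁ = germ N₂ s₂ :=
  Quot.sound ⟨N, h₁, h₂, h⟩

lemma germ_res {M : OMod O} {x : X} {N₁ N₂ : Nbhd x} (h : N₂.U ≤ N₁.U) (s : M.obj N₁.U) :
    germ N₂ (M.res h s) = germ N₁ s :=
  germ_eq N₂ le_rfl h (by rw [M.res_id])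

lemma germ_surj {M : OMod O} {x : X} (t : Stalk M x) : ∃ (N : Nbhd x) (s : M.obj N.U), t = germ N s := by
  induction t using Quot.ind with
  | _ a => exact ⟨a.1, a.2, rfl⟩

/-- Lift a binary germ-compatible operation to stalks. -/
def lift₂ {M₁ M₂ : OMod O} {x : X} {γ : Sort*}
    (f : ∀ (N₁ : Nbhd x), M₁.obj N₁.U → ∀ (N₂ : Nbhd x), M₂.obj N₂.U → γ)
    (hl : ∀ N₁ s₁ N₁' s₁' N₂ s₂, germRel M₁ x ⟨N₁, s₁⟩ ⟨N₁', s₁'⟩ →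
      f N₁ s₁ N₂ s₂ = f N₁' s₁' N₂ s₂)
    (hr : ∀ N₁ s₁ N₂ s₂ N₂' s₂', germRel M₂ x ⟨N₂, s₂⟩ ⟨N₂', s₂'⟩ →
      f N₁ s₁ N₂ s₂ = f N₁ s₁ N₂' s₂') :
    Stalk M₁ x → Stalk M₂ x → γ :=
  Quot.lift
    (fun a => Quot.lift (fun b => f a.1 a.2 b.1 b.2)
      (fun b b' hb => hr a.1 a.2 b.1 b.2 b'.1 b'.2 hb))
    (fun a a' ha => funext fun t => by
      induction t using Quot.ind with
      | _ b => exact hl a.1 a.2 a'.1 a'.2 b.1 b.2 ha)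

@[simp] lemma lift₂_germ {M₁ M₂ : OMod O} {x : X} {γ : Sort*}
    (f : ∀ (N₁ : Nbhd x), M₁.obj N₁.U → ∀ (N₂ : Nbhd x), M₂.obj N₂.U → γ) (hl hr)
    (N₁ : Nbhd x) (s₁ : M₁.obj N₁.U) (N₂ : Nbhd x) (s₂ : M₂.obj N₂.U) :
    lift₂ (γ := γ) f hl hr (germ N₁ s₁) (germ N₂ s₂) = f N₁ s₁ N₂ s₂ := rfl

end SheafPurity

namespace SheafPurity

variable {X : Type u} [TopologicalSpace X] {O : RingSheaf X}

protected def Stalk.add {M : OMod O} {x : X} : Stalk M x → Stalk M x → Stalk M x :=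
  lift₂ (fun N₁ s₁ N₂ s₂ => germ (N₁.inf N₂)
      (M.res (N₁.inf_le_left N₂) s₁ + M.res (N₁.inf_le_right N₂) s₂))
    (by
      rintro N₁ s₁ N₁' s₁' N₂ s₂ ⟨W, h₁, h₂, he⟩
      refine germ_eq (W.inf N₂) (show (W.inf N₂).U ≤ (N₁.inf N₂).U from inf_le_inf_right _ h₁) (show (W.inf N₂).U ≤ (N₁'.inf N₂).U from inf_le_inf_right _ h₂) ?_
      simp only [map_add, M.res_res]
      congr 1
      rw [← M.res_res (W.inf_le_left N₂) h₁, he, M.res_res])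
    (by
      rintro N₁ s₁ N₂ s₂ N₂' s₂' ⟨W, h₁, h₂, he⟩
      refine germ_eq (N₁.inf W) (show (N₁.inf W).U ≤ (N₁.inf N₂).U from inf_le_inf_left _ h₁) (show (N₁.inf W).U ≤ (N₁.inf N₂').U from inf_le_inf_left _ h₂) ?_
      simp only [map_add, M.res_res]
      congr 1
      rw [← M.res_res (N₁.inf_le_right W) h₁, he, M.res_res])

protected def Stalk.neg {M : OMod O} {x : X} : Stalk M x → Stalk M x :=
  Quot.lift (fun a => germ a.1 (-a.2)) (by
    rintro a b ⟨W, h₁, h₂, he⟩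
    exact germ_eq W h₁ h₂ (by simp only [map_neg, he]))

@[simp] lemma add_germ {M : OMod O} {x : X} (N₁ N₂ : Nbhd x) (s₁ : M.obj N₁.U)
    (s₂ : M.obj N₂.U) : Stalk.add (germ N₁ s₁) (germ N₂ s₂) =
      germ (N₁.inf N₂) (M.res (N₁.inf_le_left N₂) s₁ + M.res (N₁.inf_le_right N₂) s₂) := rfl

@[simp] lemma neg_germ {M : OMod O} {x : X} (N : Nbhd x) (s : M.obj N.U) :
    Stalk.neg (germ N s) = germ N (-s) := rfl


section AddGroup
variable {M : OMod O} {x : X}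

set_option maxHeartbeats 1000000 in
lemma stalk_add_assoc (a b c : Stalk M x) :
    Stalk.add (Stalk.add a b) c = Stalk.add a (Stalk.add b c) := by
  obtain ⟨N₁, s₁, rfl⟩ := germ_surj a
  obtain ⟨N₂, s₂, rfl⟩ := germ_surj b
  obtain ⟨N₃, s₃, rfl⟩ := germ_surj c
  simp only [add_germ]
  refine germ_eq ((N₁.inf N₂).inf N₃) le_rfl (le_of_eq (inf_assoc _ _ _)) ?_
  simp only [map_add, M.res_res, add_assoc]

lemma stalk_zero_add (a : Stalk M x) :
    Stalk.add (germ (default : Nbhd x) 0) a = a := by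
  obtain ⟨N, s, rfl⟩ := germ_surj a
  simp only [add_germ]
  refine germ_eq ((default : Nbhd x).inf N) le_rfl (Nbhd.inf_le_right _ _) ?_
  simp only [map_add, map_zero, M.res_res, zero_add]

lemma stalk_add_zero (a : Stalk M x) :
    Stalk.add a (germ (default : Nbhd x) 0) = a := by
  obtain ⟨N, s, rfl⟩ := germ_surj a
  simp only [add_germ]
  refine germ_eq (N.inf (default : Nbhd x)) le_rfl (Nbhd.inf_le_left _ _) ?_
  simp only [map_add, map_zero, M.res_res, add_zero]

lemma stalk_add_comm (a b : Stalk M x) : Stalk.add a b = Stalk.add b a := by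
  obtain ⟨N₁, s₁, rfl⟩ := germ_surj a
  obtain ⟨N₂, s₂, rfl⟩ := germ_surj b
  simp only [add_germ]
  refine germ_eq (N₁.inf N₂) le_rfl (le_of_eq (inf_comm _ _)) ?_
  simp only [map_add, M.res_res, add_comm]

lemma stalk_neg_add_cancel (a : Stalk M x) :
    Stalk.add (Stalk.neg a) a = germ (default : Nbhd x) 0 := by
  obtain ⟨N, s, rfl⟩ := germ_surj a
  simp only [neg_germ, add_germ]
  refine germ_eq (N.inf N) le_rfl le_top ?_
  simp only [map_add, map_neg, map_zero, neg_add_cancel]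

instance : Add (Stalk M x) := ⟨Stalk.add⟩
instance : Neg (Stalk M x) := ⟨Stalk.neg⟩
instance : Zero (Stalk M x) := ⟨germ (default : Nbhd x) 0⟩

instance : AddCommGroup (Stalk M x) where
  add := (· + ·)
  neg := Neg.neg
  zero := 0
  add_assoc := stalk_add_assoc
  zero_add := stalk_zero_add
  add_zero := stalk_add_zero
  add_comm := stalk_add_comm
  neg_add_cancel := stalk_neg_add_cancel
  nsmul := nsmulRec
  nsmul_zero := fun _ => rfl
  nsmul_succ := fun _ _ => rfl
  zsmul := zsmulRec
  zsmul_zero' := fun _ => rfl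
  zsmul_succ' := fun _ _ => rfl
  zsmul_neg' := fun _ _ => rfl

end AddGroup

@[simp] lemma germ_add {M : OMod O} {x : X} (N : Nbhd x) (s t : M.obj N.U) :
    (germ N (s + t) : Stalk M x) = germ N s + germ N t := by
  show _ = Stalk.add _ _
  simp only [add_germ]
  exact germ_eq (N.inf N) (Nbhd.inf_le_left _ _) le_rfl (by simp [map_add, M.res_res])

@[simp] lemma germ_zero {M : OMod O} {x : X} (N : Nbhd x) :
    (germ N (0 : M.obj N.U) : Stalk M x) = 0 := by
  show _ = germ (default : Nbhd x) 0
  exact germ_eq N le_rfl le_top (by simp)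

end SheafPurity

namespace SheafPurity

variable {X : Type u} [TopologicalSpace X] {O : RingSheaf X}

section MoreStalk
variable {M : OMod O} {x : X}

@[simp] lemma add_germ' (N₁ N₂ : Nbhd x) (s₁ : M.obj N₁.U) (s₂ : M.obj N₂.U) :
    germ N₁ s₁ + germ N₂ s₂ =
      germ (N₁.inf N₂) (M.res (N₁.inf_le_left N₂) s₁ + M.res (N₁.inf_le_right N₂) s₂) := rfl

@[simp] lemma neg_germ' (N : Nbhd x) (s : M.obj N.U) :
    -(germ N s) = germ N (-s) := rfl

lemma zero_def : (0 : Stalk M x) = germ (default : Nbhd x) 0 := rfl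

end MoreStalk

/-- A sheaf of rings, regarded as a sheaf of modules over itself. -/
@[reducible] def RingSheaf.toOMod (O : RingSheaf X) : OMod O where
  obj := O.obj
  acg U := inferInstance
  mod U := inferInstance
  res h := (O.res h).toAddMonoidHom
  res_id := O.res_id
  res_res := O.res_res
  res_smul h r m := by simpa [smul_eq_mul] using map_mul (O.res h) r m
  sheaf := O.sheaf

/-- The stalk of the structure sheaf at a point. -/
abbrev RStalk (O : RingSheaf X) (x : X) : Type u := Stalk O.toOMod x

section RingStalk

variable {x : X}

@[simp] lemma rh_apply {α β : Type u} [NonAssocSemiring α] [NonAssocSemiring β]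
    (f : α →+* β) (a : α) : f.toAddMonoidHom a = f a := rfl

@[simp] lemma toOMod_res {U V : Opens X} (h : V ≤ U) (s : O.obj U) :
    O.toOMod.res h s = O.res h s := rfl

protected def RStalk.mul : RStalk O x → RStalk O x → RStalk O x :=
  lift₂ (fun N₁ s₁ N₂ s₂ => germ (N₁.inf N₂)
      (O.res (N₁.inf_le_left N₂) s₁ * O.res (N₁.inf_le_right N₂) s₂))
    (by
      rintro N₁ s₁ N₁' s₁' N₂ s₂ ⟨W, h₁, h₂, he⟩
      refine germ_eq (W.inf N₂) (show (W.inf N₂).U ≤ (N₁.inf N₂).U from inf_le_inf_right _ h₁) (show (W.inf N₂).U ≤ (N₁'.inf N₂).U from inf_le_inf_right _ h₂) ?_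
      have he' : O.res h₁ s₁ = O.res h₂ s₁' := he
      show O.res _ _ = O.res _ _
      simp only [map_mul, O.res_res]
      congr 1
      rw [← O.res_res (W.inf_le_left N₂) h₁, he', O.res_res])
    (by
      rintro N₁ s₁ N₂ s₂ N₂' s₂' ⟨W, h₁, h₂, he⟩
      refine germ_eq (N₁.inf W) (show (N₁.inf W).U ≤ (N₁.inf N₂).U from inf_le_inf_left _ h₁) (show (N₁.inf W).U ≤ (N₁.inf N₂').U from inf_le_inf_left _ h₂) ?_
      have he' : O.res h₁ s₂ = O.res h₂ s₂' := he
      show O.res _ _ = O.res _ _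
      simp only [map_mul, O.res_res]
      congr 1
      rw [← O.res_res (N₁.inf_le_right W) h₁, he', O.res_res])

instance : Mul (RStalk O x) := ⟨RStalk.mul⟩
instance : One (RStalk O x) := ⟨germ (M := O.toOMod) (default : Nbhd x) 1⟩

@[simp] lemma mul_germ (N₁ N₂ : Nbhd x) (s₁ : O.obj N₁.U) (s₂ : O.obj N₂.U) :
    (germ (M := O.toOMod) N₁ s₁) * (germ (M := O.toOMod) N₂ s₂) =
      germ (N₁.inf N₂) (O.res (N₁.inf_le_left N₂) s₁ * O.res (N₁.inf_le_right N₂) s₂) := rfl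

lemma one_def : (1 : RStalk O x) = germ (M := O.toOMod) (default : Nbhd x) 1 := rfl


section RingAx
variable {x : X}

lemma r_mul_assoc (a b c : RStalk O x) : a * b * c = a * (b * c) := by
  obtain ⟨N₁, s₁, rfl⟩ := germ_surj a
  obtain ⟨N₂, s₂, rfl⟩ := germ_surj b
  obtain ⟨N₃, s₃, rfl⟩ := germ_surj c
  simp only [mul_germ]
  refine germ_eq ((N₁.inf N₂).inf N₃) le_rfl (le_of_eq (inf_assoc _ _ _)) ?_
  simp only [rh_apply, map_mul, O.res_res, mul_assoc]

lemma r_one_mul (a : RStalk O x) : 1 * a = a := by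
  obtain ⟨N, s, rfl⟩ := germ_surj a
  rw [one_def]
  simp only [mul_germ]
  refine germ_eq ((default : Nbhd x).inf N) le_rfl (Nbhd.inf_le_right _ _) ?_
  simp only [rh_apply, map_mul, map_one, O.res_res, one_mul]

lemma r_mul_comm (a b : RStalk O x) : a * b = b * a := by
  obtain ⟨N₁, s₁, rfl⟩ := germ_surj a
  obtain ⟨N₂, s₂, rfl⟩ := germ_surj b
  simp only [mul_germ]
  refine germ_eq (N₁.inf N₂) le_rfl (le_of_eq (inf_comm _ _)) ?_
  simp only [rh_apply, map_mul, O.res_res, mul_comm]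

lemma r_mul_one (a : RStalk O x) : a * 1 = a := by
  rw [r_mul_comm, r_one_mul]

lemma r_left_distrib (a b c : RStalk O x) : a * (b + c) = a * b + a * c := by
  obtain ⟨N₁, s₁, rfl⟩ := germ_surj a
  obtain ⟨N₂, s₂, rfl⟩ := germ_surj b
  obtain ⟨N₃, s₃, rfl⟩ := germ_surj c
  simp only [add_germ' (M := O.toOMod), mul_germ]
  refine germ_eq (N₁.inf (N₂.inf N₃)) le_rfl
    (show _ ≤ _ from le_inf (inf_le_inf_left _ (Nbhd.inf_le_left _ _))
      (inf_le_inf_left _ (Nbhd.inf_le_right _ _))) ?_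
  simp only [rh_apply, map_mul, map_add, O.res_res, mul_add]

lemma r_right_distrib (a b c : RStalk O x) : (a + b) * c = a * c + b * c := by
  rw [r_mul_comm, r_left_distrib, r_mul_comm c a, r_mul_comm c b]

lemma r_zero_mul (a : RStalk O x) : 0 * a = 0 := by
  obtain ⟨N, s, rfl⟩ := germ_surj a
  rw [zero_def]
  simp only [mul_germ]
  refine germ_eq ((default : Nbhd x).inf N) le_rfl le_top ?_
  simp only [rh_apply, map_mul, map_zero, zero_mul]

lemma r_mul_zero (a : RStalk O x) : a * 0 = 0 := by
  rw [r_mul_comm, r_zero_mul]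

instance : CommRing (RStalk O x) where
  __ := (inferInstance : AddCommGroup (Stalk (O.toOMod) x))
  mul := (· * ·)
  one := 1
  mul_assoc := r_mul_assoc
  one_mul := r_one_mul
  mul_one := r_mul_one
  mul_comm := r_mul_comm
  left_distrib := r_left_distrib
  right_distrib := r_right_distrib
  zero_mul := r_zero_mul
  mul_zero := r_mul_zero

end RingAx

/-- The germ map for the structure sheaf, as a ring homomorphism. -/
def RingSheaf.germHom (O : RingSheaf X) {x : X} (N : Nbhd x) : O.obj N.U →+* RStalk O x where
  toFun s := germ (M := O.toOMod) N s
  map_one' := by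
    rw [one_def]
    exact germ_eq N le_rfl le_top (by simp only [rh_apply, map_one])
  map_mul' r s := by
    show germ (M := O.toOMod) N (r * s) = germ (M := O.toOMod) N r * germ (M := O.toOMod) N s
    rw [mul_germ]
    exact germ_eq (N.inf N) (Nbhd.inf_le_left _ _) le_rfl
      (by simp only [rh_apply, map_mul, O.res_res])
  map_zero' := by
    show germ (M := O.toOMod) N 0 = 0
    exact germ_zero (M := O.toOMod) N
  map_add' r s := by
    show germ (M := O.toOMod) N (r + s) = germ (M := O.toOMod) N r + germ (M := O.toOMod) N s
    exact germ_add (M := O.toOMod) N r s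

@[simp] lemma germHom_apply {x : X} (N : Nbhd x) (s : O.obj N.U) :
    O.germHom N s = germ (M := O.toOMod) N s := rfl

lemma germ_res_ring {x : X} {N₁ N₂ : Nbhd x} (h : N₂.U ≤ N₁.U) (s : O.obj N₁.U) :
    germ (M := O.toOMod) N₂ (O.res h s) = germ (M := O.toOMod) N₁ s :=
  germ_res (M := O.toOMod) h s

end RingStalk

end SheafPurity

namespace SheafPurity

variable {X : Type u} [TopologicalSpace X] {O : RingSheaf X}

section ModuleStalk

variable {M : OMod O} {x : X}

protected def Stalk.smul : RStalk O x → Stalk M x → Stalk M x :=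
  lift₂ (fun N₁ r N₂ s => germ (N₁.inf N₂)
      (O.res (N₁.inf_le_left N₂) r • M.res (N₁.inf_le_right N₂) s))
    (by
      rintro N₁ r N₁' r' N₂ s ⟨W, h₁, h₂, he⟩
      refine germ_eq (W.inf N₂) (show (W.inf N₂).U ≤ (N₁.inf N₂).U from inf_le_inf_right _ h₁) (show (W.inf N₂).U ≤ (N₁'.inf N₂).U from inf_le_inf_right _ h₂) ?_
      have he' : O.res h₁ r = O.res h₂ r' := he
      simp only [map_add, M.res_smul, M.res_res, O.res_res]
      congr 1
      rw [← O.res_res (W.inf_le_left N₂) h₁, he', O.res_res])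
    (by
      rintro N₁ r N₂ s N₂' s' ⟨W, h₁, h₂, he⟩
      refine germ_eq (N₁.inf W) (show (N₁.inf W).U ≤ (N₁.inf N₂).U from inf_le_inf_left _ h₁) (show (N₁.inf W).U ≤ (N₁.inf N₂').U from inf_le_inf_left _ h₂) ?_
      simp only [M.res_smul, M.res_res, O.res_res]
      congr 1
      rw [← M.res_res (N₁.inf_le_right W) h₁, he, M.res_res])

instance : SMul (RStalk O x) (Stalk M x) := ⟨Stalk.smul⟩

@[simp] lemma smul_germ (N₁ N₂ : Nbhd x) (r : O.obj N₁.U) (s : M.obj N₂.U) :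
    (germ (M := O.toOMod) N₁ r) • (germ N₂ s) =
      germ (N₁.inf N₂) (O.res (N₁.inf_le_left N₂) r • M.res (N₁.inf_le_right N₂) s) := rfl

lemma st_one_smul (a : Stalk M x) : (1 : RStalk O x) • a = a := by
  obtain ⟨N, s, rfl⟩ := germ_surj a
  rw [one_def]
  simp only [smul_germ]
  refine germ_eq ((default : Nbhd x).inf N) le_rfl (Nbhd.inf_le_right _ _) ?_
  simp only [M.res_smul, M.res_res, map_one, one_smul]

lemma st_mul_smul (r t : RStalk O x) (a : Stalk M x) : (r * t) • a = r • t • a := by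
  obtain ⟨N₁, r, rfl⟩ := germ_surj r
  obtain ⟨N₂, t, rfl⟩ := germ_surj t
  obtain ⟨N₃, s, rfl⟩ := germ_surj a
  simp only [mul_germ, smul_germ]
  refine germ_eq ((N₁.inf N₂).inf N₃) le_rfl (le_of_eq (inf_assoc _ _ _)) ?_
  simp only [rh_apply, M.res_smul, M.res_res, O.res_res, map_mul, mul_smul]

lemma st_smul_add (r : RStalk O x) (a b : Stalk M x) : r • (a + b) = r • a + r • b := by
  obtain ⟨N₁, rr, rfl⟩ := germ_surj r
  obtain ⟨N₂, s, rfl⟩ := germ_surj a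
  obtain ⟨N₃, t, rfl⟩ := germ_surj b
  simp only [add_germ', smul_germ]
  refine germ_eq (N₁.inf (N₂.inf N₃)) le_rfl
    (show _ ≤ _ from le_inf (inf_le_inf_left _ (Nbhd.inf_le_left _ _))
      (inf_le_inf_left _ (Nbhd.inf_le_right _ _))) ?_
  simp only [rh_apply, M.res_smul, M.res_res, O.res_res, map_add, smul_add]

lemma st_smul_zero (r : RStalk O x) : r • (0 : Stalk M x) = 0 := by
  obtain ⟨N, rr, rfl⟩ := germ_surj r
  rw [zero_def]
  simp only [smul_germ]
  refine germ_eq (N.inf (default : Nbhd x)) le_rfl le_top ?_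
  simp only [map_zero, smul_zero]

lemma st_add_smul (r t : RStalk O x) (a : Stalk M x) : (r + t) • a = r • a + t • a := by
  obtain ⟨N₁, rr, rfl⟩ := germ_surj r
  obtain ⟨N₂, tt, rfl⟩ := germ_surj t
  obtain ⟨N₃, s, rfl⟩ := germ_surj a
  simp only [add_germ', smul_germ]
  refine germ_eq ((N₁.inf N₂).inf N₃) le_rfl
    (show _ ≤ _ from le_inf (inf_le_inf_right _ (Nbhd.inf_le_left _ _))
      (inf_le_inf_right _ (Nbhd.inf_le_right _ _))) ?_
  simp only [rh_apply, M.res_smul, M.res_res, O.res_res, map_add, add_smul]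

lemma st_zero_smul (a : Stalk M x) : (0 : RStalk O x) • a = 0 := by
  obtain ⟨N, s, rfl⟩ := germ_surj a
  rw [zero_def]
  simp only [smul_germ]
  refine germ_eq ((default : Nbhd x).inf N) le_rfl le_top ?_
  simp only [rh_apply, map_zero, zero_smul]

instance : Module (RStalk O x) (Stalk M x) where
  smul := (· • ·)
  one_smul := st_one_smul
  mul_smul := st_mul_smul
  smul_add := st_smul_add
  smul_zero := st_smul_zero
  add_smul := st_add_smul
  zero_smul := st_zero_smul

lemma germ_smul (N : Nbhd x) (r : O.obj N.U) (s : M.obj N.U) :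
    (germ N (r • s) : Stalk M x) = O.germHom N r • germ N s := by
  rw [germHom_apply]
  simp only [smul_germ]
  exact germ_eq (N.inf N) (Nbhd.inf_le_left _ _) le_rfl
    (by simp only [M.res_smul, M.res_res, O.res_res, rh_apply])

end ModuleStalk

/-- The underlying function of the map induced on stalks by a morphism. -/
def stalkMapFun {M N : OMod O} (f : Hom M N) (x : X) : Stalk M x → Stalk N x :=
  Quot.lift (fun a => germ a.1 (f.app _ a.2)) (by
    rintro a b ⟨W, h₁, h₂, he⟩
    refine germ_eq W h₁ h₂ ?_
    rw [f.naturality, f.naturality, he])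

@[simp] lemma stalkMapFun_germ {M N : OMod O} (f : Hom M N) (x : X)
    (Nb : Nbhd x) (s : M.obj Nb.U) :
    stalkMapFun f x (germ Nb s) = germ Nb (f.app Nb.U s) := rfl

/-- The map induced on stalks by a morphism of sheaves of modules, as a linear map
over the stalk of the structure sheaf. -/
def stalkMap {M N : OMod O} (f : M ⟶ N) (x : X) : Stalk M x →ₗ[RStalk O x] Stalk N x where
  toFun := stalkMapFun f x
  map_add' a b := by
    obtain ⟨N₁, s₁, rfl⟩ := germ_surj a
    obtain ⟨N₂, s₂, rfl⟩ := germ_surj b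
    simp only [add_germ', stalkMapFun_germ]
    refine germ_eq (N₁.inf N₂) le_rfl le_rfl ?_
    simp only [map_add, N.res_res, M.res_res, Hom.naturality]
  map_smul' r a := by
    obtain ⟨N₁, rr, rfl⟩ := germ_surj r
    obtain ⟨N₂, s, rfl⟩ := germ_surj a
    simp only [smul_germ, stalkMapFun_germ, RingHom.id_apply]
    refine germ_eq (N₁.inf N₂) le_rfl le_rfl ?_
    simp only [map_smul, N.res_smul, M.res_res, N.res_res, O.res_res, Hom.naturality]

@[simp] lemma stalkMap_germ {M N : OMod O} (f : M ⟶ N) (x : X) (Nb : Nbhd x) (s : M.obj Nb.U) :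
    stalkMap f x (germ Nb s) = germ Nb ((f : Hom M N).app Nb.U s) := rfl

/-! ## Geometric purity -/

/-- A morphism of sheaves of modules is a geometrically pure monomorphism if it is a
monomorphism (i.e. injective on sections) and the induced map on every stalk is a pure
monomorphism of modules over the stalk ring. -/
def IsGPureMono {M N : OMod O} (f : M ⟶ N) : Prop :=
  (∀ U, Function.Injective ((f : Hom M N).app U)) ∧
    ∀ x : X, IsPureMono (stalkMap f x)

/-- A sheaf of modules is geometrically pure-injective if every morphism to it extends
along every geometrically pure monomorphism. -/
def GPureInjective (P : OMod O) : Prop :=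
  ∀ (M N : OMod O) (f : M ⟶ N), IsGPureMono f →
    ∀ φ : M ⟶ P, ∃ ψ : N ⟶ P, f ≫ ψ = φ

end SheafPurity

namespace SheafPurity

variable {X : Type u} [TopologicalSpace X] {O : RingSheaf X}

/-! ## Skyscraper sheaves -/

section Sky

variable (x : X) (A : Type u) [AddCommGroup A] [Module (RStalk O x) A]

/-- The module structure on the sections of the skyscraper sheaf. -/
def skyModule (U : Opens X) : Module (O.obj U) (PLift (x ∈ U) → A) where
  smul r f := fun h => (O.germHom ⟨U, h.down⟩ r) • f h
  one_smul f := funext fun h => by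
    show O.germHom ⟨U, h.down⟩ 1 • f h = f h
    simp
  mul_smul r t f := funext fun h => by
    show O.germHom ⟨U, h.down⟩ (r * t) • f h =
      O.germHom ⟨U, h.down⟩ r • O.germHom ⟨U, h.down⟩ t • f h
    rw [map_mul, mul_smul]
  smul_zero r := funext fun h => by
    show O.germHom ⟨U, h.down⟩ r • (0 : A) = 0
    simp
  smul_add r f g := funext fun h => by
    show O.germHom ⟨U, h.down⟩ r • (f h + g h) =
      O.germHom ⟨U, h.down⟩ r • f h + O.germHom ⟨U, h.down⟩ r • g h
    rw [smul_add]
  add_smul r t f := funext fun h => by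
    show O.germHom ⟨U, h.down⟩ (r + t) • f h =
      O.germHom ⟨U, h.down⟩ r • f h + O.germHom ⟨U, h.down⟩ t • f h
    rw [map_add, add_smul]
  zero_smul f := funext fun h => by
    show O.germHom ⟨U, h.down⟩ 0 • f h = 0
    simp

/-- The skyscraper sheaf at `x` with value the `RStalk O x`-module `A`. -/
def sky : OMod O where
  obj U := PLift (x ∈ U) → A
  acg U := inferInstance
  mod U := skyModule x A U
  res {U V} h :=
    { toFun := fun f hv => f ⟨h hv.down⟩
      map_zero' := rfl
      map_add' := fun _ _ => rfl }
  res_id _ := rfl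
  res_res _ _ _ := rfl
  res_smul {U V} h r f := by
    funext hv
    show O.germHom ⟨U, h hv.down⟩ r • f ⟨h hv.down⟩ =
      O.germHom ⟨V, hv.down⟩ (O.res h r) • f ⟨h hv.down⟩
    rw [show O.germHom (x := x) ⟨V, hv.down⟩ (O.res h r) = O.germHom ⟨U, h hv.down⟩ r from
      germ_res_ring (N₁ := ⟨U, h hv.down⟩) (N₂ := ⟨V, hv.down⟩) h r]
  sheaf := by
    intro ι U V hU s compat
    have mem : ∀ (h : x ∈ U), ∃ i, x ∈ V i := fun h => Opens.mem_iSup.mp (hU ▸ h)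
    refine ⟨fun h => s (mem h.down).choose ⟨(mem h.down).choose_spec⟩,
      fun i => funext fun hv => ?_, ?_⟩
    · have hU' : x ∈ U := ((le_iSup V i).trans hU.ge) hv.down
      exact congrFun (compat (mem hU').choose i (V (mem hU').choose ⊓ V i)
        inf_le_left inf_le_right) ⟨⟨(mem hU').choose_spec, hv.down⟩⟩
    · intro y hy
      funext h
      obtain ⟨i, hi⟩ := mem h.down
      have h1 : y h = s i ⟨hi⟩ := congrFun (hy i) ⟨hi⟩
      have h2 : s (mem h.down).choose ⟨(mem h.down).choose_spec⟩ = s i ⟨hi⟩ :=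
        congrFun (compat _ i (V (mem h.down).choose ⊓ V i) inf_le_left inf_le_right)
          ⟨⟨(mem h.down).choose_spec, hi⟩⟩
      rw [h1, h2]

end Sky

/-- Functoriality of the skyscraper sheaf. -/
def skyMap {x : X} {A B : Type u} [AddCommGroup A] [Module (RStalk O x) A]
    [AddCommGroup B] [Module (RStalk O x) B] (φ : A →ₗ[RStalk O x] B) :
    (sky x A : OMod O) ⟶ (sky x B : OMod O) where
  app U :=
    { toFun := fun f h => φ (f h)
      map_add' := fun f g => funext fun h => by
        show φ (f h + g h) = φ (f h) + φ (g h)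
        rw [map_add]
      map_smul' := fun r f => funext fun h => by
        show φ (O.germHom ⟨U, h.down⟩ r • f h) = O.germHom ⟨U, h.down⟩ r • φ (f h)
        rw [map_smul] }
  naturality _ _ := rfl

/-- The skyscraper sheaf functor. -/
def skyFunctor (O : RingSheaf X) (x : X) : ModuleCat.{u} (RStalk O x) ⥤ OMod O where
  obj A := sky x A
  map φ := skyMap φ.hom
  map_id A := rfl
  map_comp φ ψ := rfl

end SheafPurity

namespace SheafPurity

variable {X : Type u} [TopologicalSpace X] {O : RingSheaf X}

/-! ## Direct image along the inclusion of an open subset -/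

/-- The direct image `ι_{U,*}(M|_U)` of the restriction of `M` to an open set `U`:
its sections over `V` are the sections of `M` over `U ⊓ V`. -/
def pushforwardInto (U : Opens X) (M : OMod O) : OMod O where
  obj V := M.obj (U ⊓ V)
  acg V := inferInstance
  mod V := Module.compHom _ (O.res (inf_le_right : U ⊓ V ≤ V))
  res {V W} h := M.res (inf_le_inf_left U h)
  res_id s := M.res_id s
  res_res h1 h2 s := M.res_res _ _ s
  res_smul {V W} h r m := by
    show M.res (U := U ⊓ V) (V := U ⊓ W) (inf_le_inf_left U h) (O.res (inf_le_right : U ⊓ V ≤ V) r • m) =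
      O.res (inf_le_right : U ⊓ W ≤ W) (O.res h r) • M.res (U := U ⊓ V) (V := U ⊓ W) (inf_le_inf_left U h) m
    rw [M.res_smul, O.res_res, O.res_res]
  sheaf := by
    intro ι V₀ V hV s compat
    obtain ⟨t, ht, huniq⟩ := M.sheaf ι (U ⊓ V₀) (fun i => U ⊓ V i)
      (by rw [hV, inf_iSup_eq]) s
      (by
        intro i j W hWi hWj
        have hW : W ≤ U ⊓ (V i ⊓ V j) :=
          le_inf (hWi.trans inf_le_left)
            (le_inf (hWi.trans inf_le_right) (hWj.trans inf_le_right))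
        calc M.res hWi (s i)
            = M.res hW (M.res (inf_le_inf_left U inf_le_left) (s i)) := by
              rw [M.res_res]
          _ = M.res hW (M.res (inf_le_inf_left U inf_le_right) (s j)) :=
              congrArg (M.res hW) (compat i j (V i ⊓ V j) inf_le_left inf_le_right)
          _ = M.res hWj (s j) := by rw [M.res_res])
    exact ⟨t, fun i => ht i, fun y hy => huniq y fun i => hy i⟩

/-- The unit morphism `M ⟶ ι_{U,*}(M|_U)`, given by restriction of sections. -/
def pushforwardUnit (U : Opens X) (M : OMod O) : M ⟶ pushforwardInto U M where
  app V :=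
    { toFun := fun m => M.res (inf_le_right : U ⊓ V ≤ V) m
      map_add' := fun _ _ => map_add _ _ _
      map_smul' := fun r m => by
        show M.res (inf_le_right : U ⊓ V ≤ V) (r • m) = O.res (inf_le_right : U ⊓ V ≤ V) r • M.res (inf_le_right : U ⊓ V ≤ V) m
        rw [M.res_smul] }
  naturality {V W} h m := by
    show M.res _ (M.res _ m) = M.res _ (M.res _ m)
    rw [M.res_res, M.res_res]

/-! ## Binary products -/

/-- The binary product of two sheaves of modules. -/
def prod2 (M N : OMod O) : OMod O where
  obj U := M.obj U × N.obj U
  acg U := inferInstance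
  mod U := inferInstance
  res {U V} h := (M.res h).prodMap (N.res h)
  res_id s := Prod.ext (M.res_id s.1) (N.res_id s.2)
  res_res h1 h2 s := Prod.ext (M.res_res h1 h2 s.1) (N.res_res h1 h2 s.2)
  res_smul h r m := Prod.ext (M.res_smul h r m.1) (N.res_smul h r m.2)
  sheaf := by
    intro ι U V hU s compat
    obtain ⟨t₁, ht₁, hu₁⟩ := M.sheaf ι U V hU (fun i => (s i).1)
      (fun i j W hWi hWj => congrArg Prod.fst (compat i j W hWi hWj))
    obtain ⟨t₂, ht₂, hu₂⟩ := N.sheaf ι U V hU (fun i => (s i).2)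
      (fun i j W hWi hWj => congrArg Prod.snd (compat i j W hWi hWj))
    refine ⟨(t₁, t₂), fun i => ?_, fun y hy => ?_⟩
    · exact Prod.ext (ht₁ i) (ht₂ i)
    · have h₁ : y.1 = t₁ := hu₁ y.1 fun i => congrArg Prod.fst (hy i)
      have h₂ : y.2 = t₂ := hu₂ y.2 fun i => congrArg Prod.snd (hy i)
      exact Prod.ext h₁ h₂

/-- A sheaf of modules is trivial (zero) if all its section modules are trivial. -/
def IsZeroOMod (M : OMod O) : Prop := ∀ U, Subsingleton (M.obj U)

/-- An isomorphism of sheaves of modules. -/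
structure OModIso (M N : OMod O) where
  hom : M ⟶ N
  inv : N ⟶ M
  hom_inv : hom ≫ inv = 𝟙 M
  inv_hom : inv ≫ hom = 𝟙 N

/-- A sheaf of modules is indecomposable if it is nonzero and in any direct sum
decomposition one of the summands is zero. -/
def IndecomposableOMod (M : OMod O) : Prop :=
  (¬ IsZeroOMod M) ∧
    ∀ (A B : OMod O), Nonempty (OModIso M (prod2 A B)) → IsZeroOMod A ∨ IsZeroOMod B

/-- The canonical morphism from `M` to the skyscraper at `x` with value the stalk `M_x`. -/
def toSkyStalk (M : OMod O) (x : X) : M ⟶ (sky x (Stalk M x) : OMod O) where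
  app U :=
    { toFun := fun m h => germ ⟨U, h.down⟩ m
      map_add' := fun m₁ m₂ => funext fun h => germ_add _ _ _
      map_smul' := fun r m => funext fun h => by
        show germ ⟨U, h.down⟩ (r • m) = O.germHom ⟨U, h.down⟩ r • germ ⟨U, h.down⟩ m
        exact germ_smul _ _ _ }
  naturality {U V} h m := by
    funext hv
    show germ ⟨U, h hv.down⟩ m = germ ⟨V, hv.down⟩ (M.res h m)
    exact (germ_res (N₁ := ⟨U, h hv.down⟩) (N₂ := ⟨V, hv.down⟩) h m).symm

end SheafPurity

namespace SheafPurity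

variable {X : Type u} [TopologicalSpace X]

/-- The open subset of `X` corresponding to an open subset of the open subspace `U`. -/
def extendOpen (U : Opens X) (V : Opens ((U : Set X) : Type u)) : Opens X :=
  ⟨Subtype.val '' (V : Set ((U : Set X) : Type u)), U.2.isOpenMap_subtype_val _ V.2⟩

lemma extendOpen_mono (U : Opens X) {V W : Opens ((U : Set X) : Type u)} (h : V ≤ W) :
    extendOpen U V ≤ extendOpen U W :=
  Set.image_mono h

lemma extendOpen_iSup (U : Opens X) {ι : Type u} (V : ι → Opens ((U : Set X) : Type u)) :
    extendOpen U (iSup V) = iSup (fun i => extendOpen U (V i)) := by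
  apply Opens.ext
  simp only [extendOpen, Opens.coe_iSup, Set.image_iUnion]
  rfl

/-- The open subset of the subspace `U` obtained by intersecting with an open subset
of `X`. -/
def restrictOpen (U : Opens X) (W : Opens X) : Opens ((U : Set X) : Type u) :=
  ⟨Subtype.val ⁻¹' (W : Set X), (W.2).preimage continuous_subtype_val⟩

lemma extendOpen_restrictOpen (U : Opens X) {W : Opens X} (h : W ≤ extendOpen U ⊤) :
    extendOpen U (restrictOpen U W) = W := by
  apply Opens.ext
  show Subtype.val '' (Subtype.val ⁻¹' (W : Set X)) = (W : Set X)
  rw [Set.image_preimage_eq_inter_range, Subtype.range_val]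
  refine Set.inter_eq_self_of_subset_left ?_
  intro x hx
  have := h hx
  obtain ⟨y, _, rfl⟩ := this
  exact y.2

lemma restrictOpen_extendOpen (U : Opens X) (V : Opens ((U : Set X) : Type u)) :
    restrictOpen U (extendOpen U V) = V :=
  Opens.ext (Set.preimage_image_eq _ Subtype.val_injective)

/-- Restriction of the sheaf condition to an open subspace. -/
lemma isSheafFamily_restrict (U : Opens X) (F : Opens X → Type u)
    (res : ∀ (A B : Opens X), B ≤ A → F A → F B)
    (hF : IsSheafFamily X F res) :
    IsSheafFamily ((U : Set X) : Type u) (fun V => F (extendOpen U V))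
      (fun _ _ h s => res _ _ (extendOpen_mono U h) s) := by
  intro ι V₀ V hV s compat
  refine hF ι (extendOpen U V₀) (fun i => extendOpen U (V i))
    (by rw [hV, extendOpen_iSup]) s ?_
  intro i j W hWi hWj
  have hWi' : restrictOpen U W ≤ V i := by
    intro a ha
    obtain ⟨b, hb, hba⟩ := hWi ha
    exact (Subtype.val_injective hba) ▸ hb
  have hWj' : restrictOpen U W ≤ V j := by
    intro a ha
    obtain ⟨b, hb, hba⟩ := hWj ha
    exact (Subtype.val_injective hba) ▸ hb
  have eW : extendOpen U (restrictOpen U W) = W :=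
    extendOpen_restrictOpen U (hWi.trans (extendOpen_mono U le_top))
  revert hWi hWj
  rw [← eW]
  intro hWi hWj
  exact compat i j (restrictOpen U W) hWi' hWj'

variable {O : RingSheaf X}

/-- The restriction of a sheaf of rings to an open subspace. -/
def RingSheaf.restrict (O : RingSheaf X) (U : Opens X) :
    RingSheaf ((U : Set X) : Type u) where
  obj V := O.obj (extendOpen U V)
  ring V := inferInstance
  res h := O.res (extendOpen_mono U h)
  res_id s := O.res_id s
  res_res h1 h2 s := O.res_res _ _ s
  sheaf := isSheafFamily_restrict U O.obj (fun _ _ h s => O.res h s) O.sheaf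

/-- The restriction of a sheaf of modules to an open subspace. -/
def OMod.restrict (M : OMod O) (U : Opens X) : OMod (O.restrict U) where
  obj V := M.obj (extendOpen U V)
  acg V := inferInstance
  mod V := M.mod (extendOpen U V)
  res h := M.res (extendOpen_mono U h)
  res_id s := M.res_id s
  res_res h1 h2 s := M.res_res _ _ s
  res_smul h r m := M.res_smul (extendOpen_mono U h) r m
  sheaf := isSheafFamily_restrict U M.obj (fun _ _ h s => M.res h s) M.sheaf

end SheafPurity

/-! Extension by zero `ι_!` is left adjoint to restriction to `U`: a morphism `φ : M ⟶ P|_U`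
extends to `ι_! M ⟶ P` by gluing `φ s` on `V ∩ U` with `0` near the points of `V` outside `U`,
where `s` vanishes. It also preserves g-pure monomorphisms, because its stalks are those of the
original sheaf at points of `U` and zero elsewhere. So for a g-pure `f : M ⟶ M'` on `U` and
`φ : M ⟶ N|_U`, the adjoint `ι_! M ⟶ N` of `φ` extends along `ι_! f` by g-pure-injectivity of
`N`, and composing the unit `M' ⟶ (ι_! M')|_U` with the restriction of that extension extends `φ`
along `f`. -/

namespace SheafPurity

variable {X : Type u} [TopologicalSpace X] {O : RingSheaf X}

lemma extendOpen_le (U : Opens X) (V : Opens ((U : Set X) : Type u)) : extendOpen U V ≤ U := by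
  rintro x ⟨y, -, rfl⟩
  exact y.2

lemma extendOpen_restrictOpen_le (U W : Opens X) : extendOpen U (restrictOpen U W) ≤ W := by
  rintro x ⟨y, hy, rfl⟩
  exact hy

lemma restrictOpen_mono (U : Opens X) {V W : Opens X} (h : W ≤ V) :
    restrictOpen U W ≤ restrictOpen U V :=
  fun _ ha => h ha

lemma mem_extendOpen (U : Opens X) {V : Opens ((U : Set X) : Type u)} {a : (U : Set X)}
    (h : a ∈ V) : (a : X) ∈ extendOpen U V :=
  ⟨a, h, rfl⟩

lemma restrictOpen_iSup (U : Opens X) {ι : Type u} (V : ι → Opens X) :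
    restrictOpen U (iSup V) = ⨆ i, restrictOpen U (V i) := by
  ext a
  simp [restrictOpen]

lemma OMod.res_eq_zero_of_le (M : OMod O) {A B C : Opens X} (hB : B ≤ A) (hC : C ≤ A)
    (hCB : C ≤ B) {s : M.obj A} (h : M.res hB s = 0) : M.res hC s = 0 := by
  rw [← M.res_res hCB hB, h, map_zero]

lemma OMod.eq_zero_of_locally_eq_zero (P : OMod O) {V : Opens X} {t : P.obj V}
    (h : ∀ x ∈ V, ∃ (W : Opens X) (hW : W ≤ V), x ∈ W ∧ P.res hW t = 0) : t = 0 := by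
  choose W hW hxW h0 using h
  let Wf : {x // x ∈ V} → Opens X := fun x => W x.1 x.2
  have hV : V = iSup Wf :=
    le_antisymm (fun x hx => Opens.mem_iSup.mpr ⟨⟨x, hx⟩, hxW x hx⟩) (iSup_le fun x => hW x.1 x.2)
  obtain ⟨_, -, huniq⟩ := P.sheaf _ V Wf hV (fun _ => 0) fun _ _ _ _ _ => by
    simp only [map_zero]
  exact (huniq t fun x => h0 x.1 x.2).trans (huniq 0 fun _ => map_zero _).symm

lemma OMod.exists_glue_zero (P : OMod O) {V A : Opens X} {ι : Type u} (W : ι → Opens X)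
    (hA : A ≤ V) (hW : ∀ i, W i ≤ V) (hcover : V ≤ A ⊔ iSup W) (σ : P.obj A)
    (hσ : ∀ i (W' : Opens X) (h : W' ≤ A), W' ≤ W i → P.res h σ = 0) :
    ∃ t : P.obj V, P.res hA t = σ ∧ ∀ i, P.res (hW i) t = 0 := by
  let Wf : Option ι → Opens X := fun o => o.elim A W
  have hV : V = iSup Wf := by
    refine le_antisymm (fun x hx => ?_) (iSup_le fun o => o.rec hA hW)
    rcases hcover hx with hxA | hxW
    · exact Opens.mem_iSup.mpr ⟨none, hxA⟩
    · obtain ⟨i, hi⟩ := Opens.mem_iSup.mp hxW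
      exact Opens.mem_iSup.mpr ⟨some i, hi⟩
  let σf : ∀ o, P.obj (Wf o) := fun o =>
    Option.rec (motive := fun o => P.obj (Wf o)) σ (fun _ => 0) o
  have compat : ∀ (o o' : Option ι) (W' : Opens X) (h : W' ≤ Wf o) (h' : W' ≤ Wf o'),
      P.res h (σf o) = P.res h' (σf o') := by
    rintro (_ | i) (_ | j) W' h h'
    · rfl
    · exact (hσ j W' h h').trans (map_zero _).symm
    · exact (map_zero _).trans (hσ i W' h' h).symm
    · exact (map_zero _).trans (map_zero _).symm
  obtain ⟨t, ht, -⟩ := P.sheaf _ V Wf hV σf compat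
  exact ⟨t, ht none, fun i => ht (some i)⟩

def germAddHom (M : OMod O) {x : X} (N : Nbhd x) : M.obj N.U →+ Stalk M x where
  toFun := germ N
  map_zero' := germ_zero N
  map_add' := germ_add N

def Stalk.liftAddHom {M : OMod O} {x : X} {A : Type*} [AddCommGroup A]
    (g : ∀ N : Nbhd x, M.obj N.U →+ A)
    (hg : ∀ {N₁ N₂ : Nbhd x} (h : N₂.U ≤ N₁.U) (s : M.obj N₁.U), g N₂ (M.res h s) = g N₁ s) :
    Stalk M x →+ A where
  toFun := Quot.lift (fun a => g a.1 a.2) fun a b ⟨_, h₁, h₂, he⟩ => by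
    rw [← hg h₁, he, hg h₂]
  map_zero' := map_zero (g default)
  map_add' a b := by
    obtain ⟨N₁, s₁, rfl⟩ := germ_surj a
    obtain ⟨N₂, s₂, rfl⟩ := germ_surj b
    show g _ (_ + _) = g N₁ s₁ + g N₂ s₂
    rw [map_add, hg, hg]

lemma exists_germ_eq_germ_eq {M₁ M₂ : OMod O} {x : X} (a : Stalk M₁ x) (b : Stalk M₂ x) :
    ∃ (N : Nbhd x) (s₁ : M₁.obj N.U) (s₂ : M₂.obj N.U), a = germ N s₁ ∧ b = germ N s₂ := by
  obtain ⟨N₁, s₁, rfl⟩ := germ_surj a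
  obtain ⟨N₂, s₂, rfl⟩ := germ_surj b
  exact ⟨N₁.inf N₂, M₁.res (N₁.inf_le_left N₂) s₁, M₂.res (N₁.inf_le_right N₂) s₂,
    (germ_res _ _).symm, (germ_res _ _).symm⟩

lemma IsPureMono.of_addEquiv {R S : Type u} [Ring R] [Ring S] {A B A' B' : Type u}
    [AddCommGroup A] [Module R A] [AddCommGroup B] [Module R B]
    [AddCommGroup A'] [Module S A'] [AddCommGroup B'] [Module S B']
    {f : A →ₗ[R] B} {f' : A' →ₗ[S] B'} (hf' : IsPureMono f') (θ : R → S)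
    (eA : A ≃+ A') (eB : B ≃+ B')
    (heA : ∀ (r : R) a, eA (r • a) = θ r • eA a) (heB : ∀ (r : R) b, eB (r • b) = θ r • eB b)
    (hcomm : ∀ a, eB (f a) = f' (eA a)) : IsPureMono f := by
  refine ⟨fun a b hab => eA.injective (hf'.1 ?_), fun m n G a b hb => ?_⟩
  · rw [← hcomm, ← hcomm, hab]
  obtain ⟨a', ha'⟩ := hf'.2 m n (fun i j => θ (G i j)) (eA ∘ a) (eB ∘ b) fun i => by
    simp only [Function.comp_apply, ← heB, ← map_sum, hb i, hcomm]
  refine ⟨eA.symm ∘ a', fun i => eA.injective ?_⟩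
  simp only [map_sum, heA, Function.comp_apply, AddEquiv.apply_symm_apply, ha' i]

lemma isPureMono_of_subsingleton {R : Type u} [Ring R] {A B : Type u} [AddCommGroup A]
    [Module R A] [AddCommGroup B] [Module R B] [Subsingleton A] (f : A →ₗ[R] B) :
    IsPureMono f :=
  ⟨fun a b _ => Subsingleton.elim a b,
    fun _ _ _ a _ _ => ⟨0, fun i => by simp [Subsingleton.elim (a i) 0]⟩⟩

def restrictMap (U : Opens X) {P Q : OMod O} (ψ : P ⟶ Q) : P.restrict U ⟶ Q.restrict U where
  app V := Hom.app ψ (extendOpen U V)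
  naturality h := Hom.naturality ψ (extendOpen_mono U h)

lemma restrictMap_comp (U : Opens X) {P Q R : OMod O} (ψ : P ⟶ Q) (χ : Q ⟶ R) :
    restrictMap U (ψ ≫ χ) = restrictMap U ψ ≫ restrictMap U χ :=
  rfl

section ExtendByZero

variable {U : Opens X}

def resToSubspace (O : RingSheaf X) (U V : Opens X) :
    O.obj V →+* (O.restrict U).obj (restrictOpen U V) :=
  O.res (extendOpen_restrictOpen_le U V)

/-- The sections of `ι_! M` over `V` are the sections of `M` over `V ∩ U` with this property,
i.e. with support closed in `V`. -/
def VanishesNearComplement (M : OMod (O.restrict U)) (V : Opens X)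
    (s : M.obj (restrictOpen U V)) : Prop :=
  ∀ x ∈ V, x ∉ U → ∃ (W : Opens X) (hW : W ≤ V), x ∈ W ∧ M.res (restrictOpen_mono U hW) s = 0

lemma VanishesNearComplement.res {M : OMod (O.restrict U)} {V W : Opens X} (h : W ≤ V)
    {s : M.obj (restrictOpen U V)} (hs : VanishesNearComplement M V s) :
    VanishesNearComplement M W (M.res (restrictOpen_mono U h) s) := by
  intro x hx hxU
  obtain ⟨W', hW', hxW', h0⟩ := hs x (h hx) hxU
  refine ⟨W' ⊓ W, inf_le_right, ⟨hxW', hx⟩, ?_⟩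
  rw [M.res_res]
  exact M.res_eq_zero_of_le _ _ (restrictOpen_mono U inf_le_left) h0

def extendByZeroSections (M : OMod (O.restrict U)) (V : Opens X) :
    Submodule ((O.restrict U).obj (restrictOpen U V)) (M.obj (restrictOpen U V)) where
  carrier := {s | VanishesNearComplement M V s}
  zero_mem' x hx _ := ⟨V, le_rfl, hx, map_zero _⟩
  add_mem' {a b} ha hb x hx hxU := by
    obtain ⟨Wa, hWa, hxa, ha0⟩ := ha x hx hxU
    obtain ⟨Wb, hWb, hxb, hb0⟩ := hb x hx hxU
    refine ⟨Wa ⊓ Wb, inf_le_left.trans hWa, ⟨hxa, hxb⟩, ?_⟩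
    rw [map_add, M.res_eq_zero_of_le _ _ (restrictOpen_mono U inf_le_left) ha0,
      M.res_eq_zero_of_le _ _ (restrictOpen_mono U inf_le_right) hb0, add_zero]
  smul_mem' r s hs x hx hxU := by
    obtain ⟨W, hW, hxW, h0⟩ := hs x hx hxU
    exact ⟨W, hW, hxW, by rw [M.res_smul, h0, smul_zero]⟩

def extendByZeroRes (M : OMod (O.restrict U)) {V W : Opens X} (h : W ≤ V) :
    extendByZeroSections M V →+ extendByZeroSections M W where
  toFun s := ⟨M.res (restrictOpen_mono U h) s, s.2.res h⟩
  map_zero' := Subtype.ext (map_zero _)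
  map_add' _ _ := Subtype.ext (map_add _ _ _)

lemma isSheafFamily_extendByZero (M : OMod (O.restrict U)) :
    IsSheafFamily X (fun V => extendByZeroSections M V) fun _ _ h s => extendByZeroRes M h s := by
  intro ι V Vf hV s compat
  have hVf : ∀ i, Vf i ≤ V := fun i => (le_iSup Vf i).trans hV.ge
  have compat' : ∀ (i j : ι) (W : Opens ((U : Set X) : Type u))
      (hWi : W ≤ restrictOpen U (Vf i)) (hWj : W ≤ restrictOpen U (Vf j)),
      M.res hWi (s i).1 = M.res hWj (s j).1 := by
    intro i j W hWi hWj
    have h := congrArg (fun z => M.res (restrictOpen_extendOpen U W).ge z.1)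
      (compat i j (extendOpen U W) ((extendOpen_mono U hWi).trans (extendOpen_restrictOpen_le U _))
        ((extendOpen_mono U hWj).trans (extendOpen_restrictOpen_le U _)))
    simpa only [extendByZeroRes, AddMonoidHom.coe_mk, ZeroHom.coe_mk, M.res_res] using h
  obtain ⟨t, ht, huniq⟩ := M.sheaf ι (restrictOpen U V) (fun i => restrictOpen U (Vf i))
    (by rw [hV, restrictOpen_iSup]) (fun i => (s i).1) compat'
  have htV : VanishesNearComplement M V t := by
    intro x hx hxU
    obtain ⟨i, hi⟩ := Opens.mem_iSup.mp (hV ▸ hx : x ∈ iSup Vf)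
    obtain ⟨W, hW, hxW, h0⟩ := (s i).2 x hi hxU
    refine ⟨W, hW.trans (hVf i), hxW, ?_⟩
    rw [← M.res_res (restrictOpen_mono U hW) (restrictOpen_mono U (hVf i))]
    exact (congrArg _ (ht i)).trans h0
  exact ⟨⟨t, htV⟩, fun i => Subtype.ext (ht i),
    fun y hy => Subtype.ext (huniq y.1 fun i => congrArg Subtype.val (hy i))⟩

def OMod.extendByZero (M : OMod (O.restrict U)) : OMod O where
  obj V := extendByZeroSections M V
  acg _ := inferInstance
  mod V := Module.compHom _ (resToSubspace O U V)
  res h := extendByZeroRes M h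
  res_id s := Subtype.ext (M.res_id s.1)
  res_res _ _ s := Subtype.ext (M.res_res _ _ s.1)
  res_smul {V W} h r s := Subtype.ext <| by
    show M.res _ (resToSubspace O U V r • s.1) = resToSubspace O U W (O.res h r) • M.res _ s.1
    rw [M.res_smul]
    congr 1
    exact (O.res_res _ _ r).trans (O.res_res _ _ r).symm
  sheaf := isSheafFamily_extendByZero M

def extendByZeroMap {M M' : OMod (O.restrict U)} (f : M ⟶ M') :
    M.extendByZero ⟶ M'.extendByZero where
  app V :=
    { toFun := fun s => ⟨Hom.app f (restrictOpen U V) s.1, fun x hx hxU => by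
        obtain ⟨W, hW, hxW, h0⟩ := s.2 x hx hxU
        exact ⟨W, hW, hxW, by rw [Hom.naturality f, h0, map_zero]⟩⟩
      map_add' _ _ := Subtype.ext (map_add _ _ _)
      map_smul' _ _ := Subtype.ext (map_smul _ _ _) }
  naturality h s := Subtype.ext (Hom.naturality f (restrictOpen_mono U h) s.1)

def extendByZeroUnit (M : OMod (O.restrict U)) : M ⟶ M.extendByZero.restrict U where
  app V :=
    { toFun := fun m => ⟨M.res (restrictOpen_extendOpen U V).le m,
        fun _ hy hyU => absurd (extendOpen_le U V hy) hyU⟩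
      map_add' _ _ := Subtype.ext (map_add _ _ _)
      map_smul' r m := Subtype.ext (M.res_smul _ r m) }
  naturality _ m := Subtype.ext ((M.res_res _ _ m).trans (M.res_res _ _ m).symm)

lemma comp_extendByZeroUnit {M M' : OMod (O.restrict U)} (f : M ⟶ M') :
    f ≫ extendByZeroUnit M' = extendByZeroUnit M ≫ restrictMap U (extendByZeroMap f) :=
  Hom.ext <| funext fun V => LinearMap.ext fun m =>
    Subtype.ext (Hom.naturality f (restrictOpen_extendOpen U V).le m)

lemma subsingleton_stalk_extendByZero (M : OMod (O.restrict U)) {x : X} (hx : x ∉ U) :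
    Subsingleton (Stalk M.extendByZero x) := by
  refine subsingleton_of_forall_eq 0 fun t => ?_
  obtain ⟨N, s, rfl⟩ := germ_surj t
  obtain ⟨W, hW, hxW, h0⟩ := s.2 x N.mem hx
  rw [← germ_res (N₂ := ⟨W, hxW⟩) hW s, show M.extendByZero.res hW s = 0 from Subtype.ext h0,
    germ_zero]

variable {x : X} (hx : x ∈ U)

def Nbhd.toSubspace (N : Nbhd x) : Nbhd (⟨x, hx⟩ : (U : Set X)) :=
  ⟨restrictOpen U N.U, N.mem⟩

def Nbhd.ofSubspace (N : Nbhd (⟨x, hx⟩ : (U : Set X))) : Nbhd x :=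
  ⟨extendOpen U N.U, mem_extendOpen U N.mem⟩

def stalkExtendByZeroEquiv (M : OMod (O.restrict U)) :
    Stalk M.extendByZero x ≃+ Stalk M (⟨x, hx⟩ : (U : Set X)) :=
  AddMonoidHom.toAddEquiv
    (Stalk.liftAddHom
      (fun N => (germAddHom M (N.toSubspace hx)).comp
        (extendByZeroSections M N.U).subtype.toAddMonoidHom)
      fun {N₁ N₂} h s => germ_res (N₁ := N₁.toSubspace hx) (N₂ := N₂.toSubspace hx)
        (restrictOpen_mono U h) s.1)
    (Stalk.liftAddHom
      (fun N => (germAddHom M.extendByZero (N.ofSubspace hx)).comp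
        (Hom.app (extendByZeroUnit M) N.U).toAddMonoidHom)
      fun {N₁ N₂} h m =>
        (congrArg (germ (N₂.ofSubspace hx)) (Hom.naturality (extendByZeroUnit M) h m).symm).trans
        (germ_res (N₁ := N₁.ofSubspace hx) (N₂ := N₂.ofSubspace hx) (extendOpen_mono U h) _))
    (AddMonoidHom.ext fun t => by
      obtain ⟨N, s, rfl⟩ := germ_surj t
      exact germ_eq ((N.toSubspace hx).ofSubspace hx) le_rfl (extendOpen_restrictOpen_le U N.U)
        (Subtype.ext (M.res_res _ _ _)))
    (AddMonoidHom.ext fun t => by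
      obtain ⟨N, m, rfl⟩ := germ_surj t
      exact germ_eq N (restrictOpen_extendOpen U N.U).ge le_rfl (M.res_res _ _ _))

lemma stalkExtendByZeroEquiv_germ (M : OMod (O.restrict U)) (N : Nbhd x)
    (s : M.extendByZero.obj N.U) :
    stalkExtendByZeroEquiv hx M (germ N s) = germ (N.toSubspace hx) s.1 :=
  rfl

def rStalkToSubspace : RStalk O x →+ RStalk (O.restrict U) (⟨x, hx⟩ : (U : Set X)) :=
  Stalk.liftAddHom
    (fun N => (germAddHom (O.restrict U).toOMod (N.toSubspace hx)).comp
      (resToSubspace O U N.U).toAddMonoidHom)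
    fun {N₁ N₂} h r => by
      show germ (M := (O.restrict U).toOMod) (N₂.toSubspace hx) (O.res _ (O.res h r)) =
        germ (M := (O.restrict U).toOMod) (N₁.toSubspace hx) (O.res _ r)
      exact (congrArg (germ (M := (O.restrict U).toOMod) (N₂.toSubspace hx))
        ((O.res_res _ _ r).trans (O.res_res _ _ r).symm)).trans
        (germ_res (N₁ := N₁.toSubspace hx) (restrictOpen_mono U h) _)

lemma stalkExtendByZeroEquiv_smul (M : OMod (O.restrict U)) (r : RStalk O x)
    (t : Stalk M.extendByZero x) :
    stalkExtendByZeroEquiv hx M (r • t) =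
      rStalkToSubspace hx r • stalkExtendByZeroEquiv hx M t := by
  obtain ⟨N, r, s, rfl, rfl⟩ := exists_germ_eq_germ_eq r t
  rw [← germHom_apply, ← germ_smul, stalkExtendByZeroEquiv_germ, stalkExtendByZeroEquiv_germ]
  exact germ_smul (N.toSubspace hx) (resToSubspace O U N.U r) s.1

lemma stalkExtendByZeroEquiv_stalkMap {M M' : OMod (O.restrict U)} (f : M ⟶ M')
    (t : Stalk M.extendByZero x) :
    stalkExtendByZeroEquiv hx M' (stalkMap (extendByZeroMap f) x t) =
      stalkMap f _ (stalkExtendByZeroEquiv hx M t) := by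
  obtain ⟨N, s, rfl⟩ := germ_surj t
  rfl

lemma isGPureMono_extendByZeroMap {M M' : OMod (O.restrict U)} {f : M ⟶ M'}
    (hf : IsGPureMono f) : IsGPureMono (extendByZeroMap f) := by
  refine ⟨fun V a b hab => Subtype.ext (hf.1 _ (congrArg Subtype.val hab)), fun x => ?_⟩
  by_cases hx : x ∈ U
  · exact (hf.2 ⟨x, hx⟩).of_addEquiv (rStalkToSubspace hx) (stalkExtendByZeroEquiv hx M)
      (stalkExtendByZeroEquiv hx M') (stalkExtendByZeroEquiv_smul hx M)
      (stalkExtendByZeroEquiv_smul hx M') (stalkExtendByZeroEquiv_stalkMap hx f)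
  · have := subsingleton_stalk_extendByZero M hx
    exact isPureMono_of_subsingleton _

end ExtendByZero

section Adjunction

variable {U : Opens X} {M : OMod (O.restrict U)} {P : OMod O}

/-- `t` is the value at `s` of the morphism `ι_! M ⟶ P` adjoint to `φ`. -/
def IsExtensionByZero (φ : M ⟶ P.restrict U) {V : Opens X} (s : M.extendByZero.obj V)
    (t : P.obj V) : Prop :=
  P.res (extendOpen_restrictOpen_le U V) t = Hom.app φ (restrictOpen U V) s.1 ∧
    ∀ x ∈ V, x ∉ U → ∃ (W : Opens X) (hW : W ≤ V), x ∈ W ∧ P.res hW t = 0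

namespace IsExtensionByZero

variable {φ : M ⟶ P.restrict U} {V : Opens X} {s s' : M.extendByZero.obj V} {t t' : P.obj V}

lemma unique (h : IsExtensionByZero φ s t) (h' : IsExtensionByZero φ s t') : t = t' := by
  rw [← sub_eq_zero]
  refine P.eq_zero_of_locally_eq_zero fun x hx => ?_
  by_cases hxU : x ∈ U
  · exact ⟨_, extendOpen_restrictOpen_le U V, mem_extendOpen U (a := ⟨x, hxU⟩) hx,
      by rw [map_sub]; exact sub_eq_zero.mpr (h.1.trans h'.1.symm)⟩
  obtain ⟨W, hW, hxW, h0⟩ := h.2 x hx hxU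
  obtain ⟨W', hW', hxW', h0'⟩ := h'.2 x hx hxU
  exact ⟨W ⊓ W', inf_le_left.trans hW, ⟨hxW, hxW'⟩, by
    rw [map_sub, P.res_eq_zero_of_le _ _ inf_le_left h0, P.res_eq_zero_of_le _ _ inf_le_right h0',
      sub_self]⟩

lemma add (h : IsExtensionByZero φ s t) (h' : IsExtensionByZero φ s' t') :
    IsExtensionByZero φ (s + s') (t + t') := by
  refine ⟨by rw [map_add, h.1, h'.1]; exact (map_add _ _ _).symm, fun x hx hxU => ?_⟩
  obtain ⟨W, hW, hxW, h0⟩ := h.2 x hx hxU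
  obtain ⟨W', hW', hxW', h0'⟩ := h'.2 x hx hxU
  exact ⟨W ⊓ W', inf_le_left.trans hW, ⟨hxW, hxW'⟩, by
    rw [map_add, P.res_eq_zero_of_le _ _ inf_le_left h0, P.res_eq_zero_of_le _ _ inf_le_right h0',
      add_zero]⟩

lemma smul (r : O.obj V) (h : IsExtensionByZero φ s t) :
    IsExtensionByZero φ (r • s) (r • t) := by
  refine ⟨?_, fun x hx hxU => ?_⟩
  · rw [P.res_smul, h.1]
    exact (map_smul (Hom.app φ _) (resToSubspace O U V r) s.1).symm
  obtain ⟨W, hW, hxW, h0⟩ := h.2 x hx hxU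
  exact ⟨W, hW, hxW, by rw [P.res_smul, h0, smul_zero]⟩

lemma res {V' : Opens X} (hV : V' ≤ V) (h : IsExtensionByZero φ s t) :
    IsExtensionByZero φ (M.extendByZero.res hV s) (P.res hV t) := by
  refine ⟨?_, fun x hx hxU => ?_⟩
  · rw [P.res_res, ← P.res_res (extendOpen_mono U (restrictOpen_mono U hV))
      (extendOpen_restrictOpen_le U V), h.1]
    exact Hom.naturality φ (restrictOpen_mono U hV) s.1
  obtain ⟨W, hW, hxW, h0⟩ := h.2 x (hV hx) hxU
  exact ⟨W ⊓ V', inf_le_right, ⟨hxW, hx⟩, by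
    rw [P.res_res]; exact P.res_eq_zero_of_le _ _ inf_le_left h0⟩

end IsExtensionByZero

lemma exists_isExtensionByZero (φ : M ⟶ P.restrict U) {V : Opens X}
    (s : M.extendByZero.obj V) : ∃ t, IsExtensionByZero φ s t := by
  choose W hW hxW hs using fun p : {p // p ∈ V ∧ p ∉ U} => s.2 p.1 p.2.1 p.2.2
  have hcover : V ≤ extendOpen U (restrictOpen U V) ⊔ iSup W := by
    intro y hy
    by_cases hyU : y ∈ U
    · exact Opens.mem_sup.mpr (Or.inl (mem_extendOpen U (a := ⟨y, hyU⟩) hy))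
    · exact Opens.mem_sup.mpr (Or.inr (Opens.mem_iSup.mpr ⟨⟨y, hy, hyU⟩, hxW _⟩))
  have hvanish : ∀ p (W' : Opens X) (h : W' ≤ extendOpen U (restrictOpen U V)), W' ≤ W p →
      P.res h (Hom.app φ (restrictOpen U V) s.1) = 0 := by
    intro p W' h hWp
    have hW'V : W' ≤ V := h.trans (extendOpen_restrictOpen_le U V)
    have hW' : extendOpen U (restrictOpen U W') = W' :=
      extendOpen_restrictOpen U (h.trans (extendOpen_mono U le_top))
    calc P.res h (Hom.app φ (restrictOpen U V) s.1)
        = P.res hW'.ge ((P.restrict U).res (restrictOpen_mono U hW'V) (Hom.app φ _ s.1)) :=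
          (P.res_res _ _ _).symm
      _ = P.res hW'.ge (Hom.app φ _ (M.res (restrictOpen_mono U hW'V) s.1)) := by
          rw [Hom.naturality]
      _ = 0 := by
          rw [M.res_eq_zero_of_le _ _ (restrictOpen_mono U hWp) (hs p), map_zero]
          exact map_zero (P.res _)
  obtain ⟨t, ht, ht0⟩ := P.exists_glue_zero W (extendOpen_restrictOpen_le U V) hW hcover
    (Hom.app φ (restrictOpen U V) s.1) hvanish
  exact ⟨t, ht, fun x hx hxU => ⟨_, _, hxW ⟨x, hx, hxU⟩, ht0 _⟩⟩

noncomputable def extendByZeroLift (φ : M ⟶ P.restrict U) : M.extendByZero ⟶ P where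
  app _ :=
    { toFun := fun s => (exists_isExtensionByZero φ s).choose
      map_add' s s' := (exists_isExtensionByZero φ (s + s')).choose_spec.unique
        ((exists_isExtensionByZero φ s).choose_spec.add
          (exists_isExtensionByZero φ s').choose_spec)
      map_smul' r s := (exists_isExtensionByZero φ (r • s)).choose_spec.unique
        ((exists_isExtensionByZero φ s).choose_spec.smul r) }
  naturality h s := ((exists_isExtensionByZero φ s).choose_spec.res h).unique
    (exists_isExtensionByZero φ _).choose_spec

lemma extendByZeroUnit_comp_extendByZeroLift (φ : M ⟶ P.restrict U) :
    extendByZeroUnit M ≫ restrictMap U (extendByZeroLift φ) = φ :=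
  Hom.ext <| funext fun V => LinearMap.ext fun m =>
    (exists_isExtensionByZero φ _).choose_spec.unique
      ⟨Hom.naturality φ (restrictOpen_extendOpen U V).le m,
        fun _ hy hyU => absurd (extendOpen_le U V hy) hyU⟩

end Adjunction

end SheafPurity

open SheafPurity in
/-- Let `X` be a ringed space, `N` a g-pure-injective `O_X`-module, and
`U ⊆ X` open. Then the restriction `N|_U` is a g-pure-injective `O_U`-module. -/
theorem restriction_of_gPureInjective_is_gPureInjective
    {X : Type u} [TopologicalSpace X] (O : RingSheaf X) (N : OMod O)
    (hN : GPureInjective N) (U : Opens X) :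
    GPureInjective (N.restrict U) := by
  intro M M' f hf φ
  obtain ⟨ψ, hψ⟩ := hN _ _ (extendByZeroMap f) (isGPureMono_extendByZeroMap hf)
    (extendByZeroLift φ)
  refine ⟨extendByZeroUnit M' ≫ restrictMap U ψ, ?_⟩
  rw [← Category.assoc, comp_extendByZeroUnit, Category.assoc, ← restrictMap_comp, hψ,
    extendByZeroUnit_comp_extendByZeroLift]
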